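/- arXiv:2012.01961 — 2 statements merged into one kernel-verified Lean document; each statement's English description precedes it below -/
import Mathlib

section
/- Let K be a real symmetric n×n matrix, M a real symmetric positive definite n×n matrix, Φ a real n×r matrix whose columns form a basis of ker K, and F ∈ ℝⁿ. Define α := (Φᵀ M Φ)⁻¹ Φᵀ F and F_eq := F − M Φ α. Then there exists U ∈ ℝⁿ with K U = F_eq, and any two such solutions differ by an element of ker K. -/
/-!
For symmetric `K` the range of `K` is the orthogonal complement of `ker K`, which is spanned by
the columns of `Φ`. The inertial correction is chosen exactly so that `Φᵀ F_eq = 0`, and it is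
well defined because `Φᵀ M Φ` is positive definite when `Φ` has independent columns.
-/

open Matrix

theorem Matrix.IsHermitian.exists_mulVec_eq_iff {𝕜 ι : Type*} [RCLike 𝕜] [Fintype ι]
    [DecidableEq ι] {A : Matrix ι ι 𝕜} (hA : A.IsHermitian) (v : ι → 𝕜) :
    (∃ u, A *ᵥ u = v) ↔ ∀ z, A *ᵥ z = 0 → v ⬝ᵥ star z = 0 := by
  have hrange : LinearMap.range A.toEuclideanLin = (LinearMap.ker A.toEuclideanLin)ᗮ := by
    rw [← (isSymmetric_toEuclideanLin_iff.2 hA).orthogonal_range,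
      Submodule.orthogonal_orthogonal]
  have hv := SetLike.ext_iff.1 hrange (WithLp.toLp 2 v)
  simpa [Submodule.mem_orthogonal, EuclideanSpace.inner_eq_star_dotProduct,
    (WithLp.equiv 2 (ι → 𝕜)).symm.surjective.exists,
    (WithLp.equiv 2 (ι → 𝕜)).symm.surjective.forall, toLpLin_apply] using hv

theorem Matrix.transpose_mulVec_sub_mulVec_inv_eq_zero {m n R : Type*} [Fintype m] [Fintype n]
    [DecidableEq n] [CommRing R] (M : Matrix m m R) (Φ : Matrix m n R)
    (hΦ : IsUnit (Φᵀ * M * Φ).det) (F : m → R) :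
    Φᵀ *ᵥ (F - M *ᵥ Φ *ᵥ ((Φᵀ * M * Φ)⁻¹ *ᵥ Φᵀ *ᵥ F)) = 0 := by
  rw [mulVec_sub, mulVec_mulVec, mulVec_mulVec, mulVec_mulVec, mulVec_mulVec,
    mul_nonsing_inv _ hΦ, Matrix.one_mul, sub_self]

/-- Central well-posedness statement of the inertia relief method: if the
columns of `Φ` form a basis of `ker K`, `M` is symmetric positive definite,
`α := (Φᵀ M Φ)⁻¹ Φᵀ F` and `F_eq := F − M Φ α`, then `K U = F_eq` is solvable
and any two solutions differ by an element of `ker K`. -/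
theorem inertia_relief_wellPosed
    (n r : ℕ) (K : Matrix (Fin n) (Fin n) ℝ) (hK : K.IsSymm)
    (M : Matrix (Fin n) (Fin n) ℝ) (hM : M.PosDef)
    (Φ : Matrix (Fin n) (Fin r) ℝ)
    (hΦind : ∀ c : Fin r → ℝ, Φ.mulVec c = 0 → c = 0)
    (hΦspan : ∀ z : Fin n → ℝ, K.mulVec z = 0 ↔ ∃ c : Fin r → ℝ, z = Φ.mulVec c)
    (F : Fin n → ℝ) (α : Fin r → ℝ)
    (hα : α = ((Φᵀ * M * Φ)⁻¹).mulVec (Φᵀ.mulVec F))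
    (Feq : Fin n → ℝ) (hFeq : Feq = F - M.mulVec (Φ.mulVec α)) :
    (∃ U : Fin n → ℝ, K.mulVec U = Feq) ∧
      ∀ U₁ U₂ : Fin n → ℝ, K.mulVec U₁ = Feq → K.mulVec U₂ = Feq →
        K.mulVec (U₁ - U₂) = 0 := by
  have hA : (Φᵀ * M * Φ).PosDef := by
    simpa using hM.conjTranspose_mul_mul_same ((injective_iff_map_eq_zero Φ.mulVecLin).2 hΦind)
  have hFeq_perp : Φᵀ *ᵥ Feq = 0 := by
    rw [hFeq, hα]
    exact transpose_mulVec_sub_mulVec_inv_eq_zero M Φ hA.det_pos.ne'.isUnit F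
  refine ⟨(isHermitian_iff_isSymm.2 hK).exists_mulVec_eq_iff Feq |>.2 fun z hz => ?_,
    fun U₁ U₂ h₁ h₂ => by rw [mulVec_sub, h₁, h₂, sub_self]⟩
  obtain ⟨c, rfl⟩ := (hΦspan z).1 hz
  rw [star_trivial, dotProduct_mulVec, ← mulVec_transpose, hFeq_perp, zero_dotProduct]
end

section
/- Let K be a real symmetric positive semidefinite (n_l + n_s)×(n_l + n_s) matrix in block form K = [[K_ll, K_ls],[K_sl, K_ss]] with K_ll positive definite and dim ker K = n_s, and let Φ = [−K_ll⁻¹ K_ls ; I_{n_s}] (whose columns form a basis of ker K). Let F_eq = (F_l, F_s) ∈ ℝ^{n_l + n_s} satisfy Φᵀ F_eq = 0. Then the vector U = (K_ll⁻¹ F_l, 0), obtained by solving K_ll U_l = F_l and imposing U_s = 0, satisfies K U = F_eq; moreover U is the unique solution of K U = F_eq with vanishing s-components. -/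
/-!
Applying `K` to `(v, 0)` gives `(K_ll v, K_sl v)`. The `l`-rows therefore pin down
`v = K_ll⁻¹ F_l`, and orthogonality of the load to the rigid body modes `Φ` says exactly
`F_s = K_lsᵀ K_ll⁻¹ F_l`, which by symmetry of `K` is the `s`-row `K_sl K_ll⁻¹ F_l`.
-/

open Matrix

namespace Matrix

variable {m n R : Type*}

theorem fromBlocks_mulVec_sumElim_zero [Fintype m] [Fintype n] [NonUnitalNonAssocSemiring R]
    (A : Matrix m m R) (B : Matrix m n R) (C : Matrix n m R) (D : Matrix n n R) (v : m → R) :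
    fromBlocks A B C D *ᵥ Sum.elim v 0 = Sum.elim (A *ᵥ v) (C *ᵥ v) := by
  simp [fromBlocks_mulVec]

theorem sumElim_vecMul_fromRows_neg_one_eq_zero_iff [Fintype m] [Fintype n] [DecidableEq n]
    [Ring R] (M : Matrix m n R) (f : m → R) (g : n → R) :
    Sum.elim f g ᵥ* fromRows (-M) 1 = 0 ↔ g = f ᵥ* M := by
  rw [vecMul_fromRows, Sum.elim_comp_inl, Sum.elim_comp_inr, vecMul_one, vecMul_neg,
    neg_add_eq_zero, eq_comm]

variable [Fintype m] [DecidableEq m] [CommRing R]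

theorem transpose_mulVec_nonsing_inv_mulVec {A : Matrix m m R} (hA : A.IsSymm)
    (B : Matrix m n R) (f : m → R) : Bᵀ *ᵥ (A⁻¹ *ᵥ f) = f ᵥ* (A⁻¹ * B) := by
  rw [← vecMul_vecMul, ← mulVec_transpose, ← mulVec_transpose, hA.inv.eq]

variable [Fintype n]

theorem fromBlocks_mulVec_nonsing_inv_mulVec {A : Matrix m m R} (hA : A.IsSymm)
    (hdet : IsUnit A.det) (B : Matrix m n R) (D : Matrix n n R) (f : m → R) :
    fromBlocks A B Bᵀ D *ᵥ Sum.elim (A⁻¹ *ᵥ f) 0 = Sum.elim f (f ᵥ* (A⁻¹ * B)) := by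
  rw [fromBlocks_mulVec_sumElim_zero, mulVec_mulVec, mul_nonsing_inv A hdet, one_mulVec,
    transpose_mulVec_nonsing_inv_mulVec hA]

theorem eq_nonsing_inv_mulVec_of_fromBlocks_mulVec_sumElim_zero {A : Matrix m m R}
    (hdet : IsUnit A.det) {B : Matrix m n R} {C : Matrix n m R} {D : Matrix n n R}
    {v f : m → R} {g : n → R} (h : fromBlocks A B C D *ᵥ Sum.elim v 0 = Sum.elim f g) :
    v = A⁻¹ *ᵥ f := by
  rw [fromBlocks_mulVec_sumElim_zero, Sum.elim_eq_iff] at h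
  rw [← h.1, mulVec_mulVec, nonsing_inv_mul A hdet, one_mulVec]

end Matrix

theorem inertia_relief_final_solve_general
    (nl ns : ℕ)
    (Kll : Matrix (Fin nl) (Fin nl) ℝ) (Kls : Matrix (Fin nl) (Fin ns) ℝ)
    (Ksl : Matrix (Fin ns) (Fin nl) ℝ) (Kss : Matrix (Fin ns) (Fin ns) ℝ)
    (K : Matrix (Fin nl ⊕ Fin ns) (Fin nl ⊕ Fin ns) ℝ)
    (hKdef : K = Matrix.fromBlocks Kll Kls Ksl Kss)
    (hK : K.PosSemidef) (hKll : Kll.PosDef)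
    (Φ : Matrix (Fin nl ⊕ Fin ns) (Fin ns) ℝ)
    (hΦ : Φ = Matrix.fromRows (-(Kll⁻¹ * Kls)) (1 : Matrix (Fin ns) (Fin ns) ℝ))
    (Fl : Fin nl → ℝ) (Fs : Fin ns → ℝ)
    (hFeq : Φᵀ.mulVec (Sum.elim Fl Fs) = 0)
    (U : Fin nl ⊕ Fin ns → ℝ)
    (hU : U = Sum.elim (Kll⁻¹.mulVec Fl) 0) :
    K.mulVec U = Sum.elim Fl Fs ∧
      ∀ V : Fin nl ⊕ Fin ns → ℝ, K.mulVec V = Sum.elim Fl Fs →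
        (∀ i : Fin ns, V (Sum.inr i) = 0) → V = U := by
  have hdet : IsUnit Kll.det := (isUnit_iff_isUnit_det Kll).1 hKll.isUnit
  have hKsymm : K.IsSymm := isHermitian_iff_isSymm.1 hK.isHermitian
  obtain ⟨hKll_symm, hKsl, -⟩ := isSymm_fromBlocks_iff.1 (hKdef ▸ hKsymm)
  have hFs : Fs = Fl ᵥ* (Kll⁻¹ * Kls) := by
    rwa [mulVec_transpose, hΦ, sumElim_vecMul_fromRows_neg_one_eq_zero_iff] at hFeq
  subst hKdef hKsl hFs hU
  refine ⟨fromBlocks_mulVec_nonsing_inv_mulVec hKll_symm hdet Kls Kss Fl, fun V hV hVs => ?_⟩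
  have hV_eq : V = Sum.elim (V ∘ Sum.inl) 0 := by
    ext (i | i)
    · rfl
    · exact hVs i
  rw [hV_eq] at hV ⊢
  rw [eq_nonsing_inv_mulVec_of_fromBlocks_mulVec_sumElim_zero hdet hV]

/-- Final solve of the inertia relief method: for an equilibrated load
`F_eq = (F_l, F_s)` (orthogonal to the rigid body modes `Φ`), the vector
`U = (K_ll⁻¹ F_l, 0)` satisfies `K U = F_eq`, and it is the unique such
solution with vanishing `s`-components. -/
theorem inertia_relief_final_solve
    (nl ns : ℕ)
    (Kll : Matrix (Fin nl) (Fin nl) ℝ) (Kls : Matrix (Fin nl) (Fin ns) ℝ)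
    (Ksl : Matrix (Fin ns) (Fin nl) ℝ) (Kss : Matrix (Fin ns) (Fin ns) ℝ)
    (K : Matrix (Fin nl ⊕ Fin ns) (Fin nl ⊕ Fin ns) ℝ)
    (hKdef : K = Matrix.fromBlocks Kll Kls Ksl Kss)
    (hK : K.PosSemidef) (hKll : Kll.PosDef)
    (hdim : Module.finrank ℝ (LinearMap.ker K.mulVecLin) = ns)
    (Φ : Matrix (Fin nl ⊕ Fin ns) (Fin ns) ℝ)
    (hΦ : Φ = Matrix.fromRows (-(Kll⁻¹ * Kls)) (1 : Matrix (Fin ns) (Fin ns) ℝ))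
    (Fl : Fin nl → ℝ) (Fs : Fin ns → ℝ)
    (hFeq : Φᵀ.mulVec (Sum.elim Fl Fs) = 0)
    (U : Fin nl ⊕ Fin ns → ℝ)
    (hU : U = Sum.elim (Kll⁻¹.mulVec Fl) 0) :
    K.mulVec U = Sum.elim Fl Fs ∧
      ∀ V : Fin nl ⊕ Fin ns → ℝ, K.mulVec V = Sum.elim Fl Fs →
        (∀ i : Fin ns, V (Sum.inr i) = 0) → V = U :=
  inertia_relief_final_solve_general nl ns Kll Kls Ksl Kss K hKdef hK hKll Φ hΦ Fl Fs hFeq U hU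
end
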